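/- For t > 0 define T : ℝ² → ℝ² by T(x₁, x₂) = ((1−2t)x₁ − 2t x₂, x₂) (the blockwise proximal-gradient update of Example 2.2 in the first coordinate). Then: (a) for every t > 0 and every α ∈ (0,1), T is NOT α-fne on ℝ², i.e., there exist x, y ∈ ℝ² with ‖Tx − Ty‖² > ‖x − y‖² − ((1−α)/α)‖(x − Tx) − (y − Ty)‖²; and (b) for every t ∈ (0, 1/2), every z ∈ ℝ, and every α ∈ [t, 1), T is α-fne with constant α on the affine line ℝ × {z}: for all x, y ∈ ℝ² with x₂ = y₂ = z, ‖Tx − Ty‖² ≤ ‖x − y‖² − ((1−α)/α)‖(x − Tx) − (y − Ty)‖². -/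

import Mathlib

/-! A map that is not nonexpansive is not α-fne for any `α ∈ (0, 1]`; on `ℝ²` the update
expands the difference `(0, 1)`. Along a horizontal line it acts on differences as the relaxation
`d ↦ (1 - 2t) d`, whose residual is `2t d`, and `1 - (1 - 2t)² = 4t(1 - t) ≥ ((1 - α)/α)(2t)²`
holds exactly when `t ≤ α`. -/
noncomputable section

/-- The blockwise proximal-gradient update of Example 2.2 (first coordinate updated):
`T(x₁, x₂) = ((1 − 2t)x₁ − 2t x₂, x₂)` on `ℝ²` (as `EuclideanSpace ℝ (Fin 2)`). -/
def Tpg (t : ℝ) (x : EuclideanSpace ℝ (Fin 2)) : EuclideanSpace ℝ (Fin 2) :=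
  WithLp.toLp 2 (fun i => if i = 0 then (1 - 2 * t) * x 0 - 2 * t * x 1 else x 1)

lemma one_sub_two_mul_sq_le {t α : ℝ} (ht : 0 < t) (htα : t ≤ α) :
    (1 - 2 * t) ^ 2 ≤ 1 - (1 - α) / α * (2 * t) ^ 2 := by
  have hα : 0 < α := ht.trans_le htα
  have key : (1 - α) / α * (2 * t) ^ 2 ≤ 4 * t - 4 * t ^ 2 := by
    rw [div_mul_eq_mul_div, div_le_iff₀ hα]
    nlinarith
  nlinarith [key]

section FirmNonexpansiveness

variable {E : Type*} [SeminormedAddCommGroup E]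

lemma norm_sub_sq_sub_lt_of_norm_lt {α : ℝ} (hα₀ : 0 < α) (hα₁ : α ≤ 1)
    {x y x' y' r : E} (h : ‖x - y‖ < ‖x' - y'‖) :
    ‖x - y‖ ^ 2 - ((1 - α) / α) * ‖r‖ ^ 2 < ‖x' - y'‖ ^ 2 := by
  have hc : 0 ≤ (1 - α) / α := div_nonneg (by linarith) hα₀.le
  have hsq : ‖x - y‖ ^ 2 < ‖x' - y'‖ ^ 2 := sq_lt_sq' (by linarith [norm_nonneg (x - y)]) h
  nlinarith [mul_nonneg hc (sq_nonneg ‖r‖)]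

variable [NormedSpace ℝ E] in
lemma norm_sub_sq_le_of_sub_eq_smul {t α : ℝ} (ht : 0 < t) (htα : t ≤ α) {x y x' y' : E}
    (h : x' - y' = (1 - 2 * t) • (x - y)) :
    ‖x' - y'‖ ^ 2 ≤ ‖x - y‖ ^ 2 - ((1 - α) / α) * ‖(x - x') - (y - y')‖ ^ 2 := by
  have hres : (x - x') - (y - y') = (2 * t) • (x - y) := by
    rw [sub_sub_sub_comm, h]
    module
  rw [h, hres, norm_smul, norm_smul, mul_pow, mul_pow, Real.norm_eq_abs, Real.norm_eq_abs,
    sq_abs, sq_abs]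
  nlinarith [one_sub_two_mul_sq_le ht htα, sq_nonneg ‖x - y‖]

end FirmNonexpansiveness

lemma Tpg_sub_Tpg_of_apply_one_eq (t : ℝ) {x y : EuclideanSpace ℝ (Fin 2)} (h : x 1 = y 1) :
    Tpg t x - Tpg t y = (1 - 2 * t) • (x - y) := by
  ext i
  fin_cases i
  · simp only [Tpg, Fin.isValue, Fin.zero_eta, h, PiLp.sub_apply, PiLp.smul_apply, ↓reduceIte,
      smul_eq_mul]
    ring
  · simp [Tpg, h]

lemma norm_lt_norm_Tpg_sub_Tpg {t : ℝ} (ht : t ≠ 0) :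
    ‖!₂[(0 : ℝ), 1] - 0‖ < ‖Tpg t !₂[0, 1] - Tpg t 0‖ := by
  have hsq : ‖!₂[(0 : ℝ), 1] - 0‖ ^ 2 < ‖Tpg t !₂[0, 1] - Tpg t 0‖ ^ 2 := by
    simp only [EuclideanSpace.norm_sq_eq, Fin.sum_univ_two]
    simp [Tpg, ht]
  exact lt_of_pow_lt_pow_left₀ 2 (norm_nonneg _) hsq

/-- (a) for every `t > 0` and every `α ∈ (0,1)`, `T` is not α-fne on `ℝ²`;
(b) for every `t ∈ (0, 1/2)`, every `z ∈ ℝ` and every `α ∈ [t, 1)`, `T` is α-fne with constant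
`α` on the affine line `ℝ × {z}`. -/
theorem statement19 :
    (∀ t : ℝ, 0 < t → ∀ α : ℝ, α ∈ Set.Ioo (0 : ℝ) 1 →
      ∃ x y : EuclideanSpace ℝ (Fin 2),
        ‖x - y‖ ^ 2 - ((1 - α) / α) * ‖(x - Tpg t x) - (y - Tpg t y)‖ ^ 2
          < ‖Tpg t x - Tpg t y‖ ^ 2)
    ∧ (∀ t : ℝ, t ∈ Set.Ioo (0 : ℝ) (1 / 2) → ∀ z : ℝ, ∀ α : ℝ, α ∈ Set.Ico t 1 →
      ∀ x y : EuclideanSpace ℝ (Fin 2), x 1 = z → y 1 = z →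
        ‖Tpg t x - Tpg t y‖ ^ 2
          ≤ ‖x - y‖ ^ 2 - ((1 - α) / α) * ‖(x - Tpg t x) - (y - Tpg t y)‖ ^ 2) := by
  refine ⟨fun t ht α hα => ⟨!₂[0, 1], 0, ?_⟩, fun t ht z α hα x y hx hy => ?_⟩
  · exact norm_sub_sq_sub_lt_of_norm_lt hα.1 hα.2.le (norm_lt_norm_Tpg_sub_Tpg ht.ne')
  · exact norm_sub_sq_le_of_sub_eq_smul ht.1 hα.1
      (Tpg_sub_Tpg_of_apply_one_eq t (hx.trans hy.symm))
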